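/- Let m be even and let f be a bent function in m variables with dual f*. Set D_f = f⁻¹(1) and, for each b ∈ 𝔽₂^m∖{0}, define the block B_b = {x ∈ D_f : b·x + f*(b) = 1}. Write s = (−1)^{f*(0)} ∈ {1,−1}. Then: (1) 2·|D_f| = 2^m − s·2^{m/2}; (2) 4·|B_b| = 2^m − 2^{m/2}(s − 1) for every b ∈ 𝔽₂^m∖{0}; (3) for every pair of distinct points p, q ∈ D_f, 2·|{b ∈ 𝔽₂^m∖{0} : p ∈ B_b and q ∈ B_b}| = 2^{m−1} + 2^{m/2} + s − 1 (so (D_f, {B_b}) is a 2-design); (4) for any two distinct a, b ∈ 𝔽₂^m∖{0}, 8·|B_a ∩ B_b| = 2^m + 2^{m/2+1} − 2^{m/2}(s + (−1)^{f*(a)+f*(b)+f*(a+b)}), so the design is quasi-symmetric with exactly two block intersection numbers. -/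
import Mathlib

open Finset

/-- dot product on 𝔽₂^m -/
def dotp {m : ℕ} (a x : Fin m → ZMod 2) : ZMod 2 := ∑ i, a i * x i

/-- (−1)^a for a ∈ 𝔽₂, as an integer -/
def sgn (a : ZMod 2) : ℤ := if a = 0 then 1 else -1

/-- Walsh transform of f on a finite subset P of 𝔽₂^m -/
def walsh {m : ℕ} (P : Finset (Fin m → ZMod 2)) (f : (Fin m → ZMod 2) → ZMod 2)
    (u : Fin m → ZMod 2) : ℤ :=
  ∑ x ∈ P, sgn (f x + dotp u x)

/-- Walsh transform of f on all of 𝔽₂^m -/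
def walshF {m : ℕ} (f : (Fin m → ZMod 2) → ZMod 2) (u : Fin m → ZMod 2) : ℤ :=
  walsh Finset.univ f u


/-- The support D_f = f⁻¹(1), as a finset. -/
def suppD {m : ℕ} (f : (Fin m → ZMod 2) → ZMod 2) : Finset (Fin m → ZMod 2) :=
  Finset.univ.filter (fun x => f x = 1)

/-- The block B_b = {x ∈ D_f : b·x + f*(b) = 1}. -/
def blkD {m : ℕ} (f fstar : (Fin m → ZMod 2) → ZMod 2) (b : Fin m → ZMod 2) :
    Finset (Fin m → ZMod 2) :=
  (suppD f).filter (fun x => dotp b x + fstar b = 1)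

/-! ### Auxiliary lemmas -/

def ind (a : ZMod 2) : ℤ := if a = 1 then 1 else 0

lemma sgn_add (a b : ZMod 2) : sgn (a + b) = sgn a * sgn b := by revert a b; decide

lemma expand2 (a b : ZMod 2) : 4 * (ind a * ind b) = 1 - sgn a - sgn b + sgn (a + b) := by
  revert a b; decide

lemma expand3 (a b c : ZMod 2) : 8 * (ind a * ind b * ind c) =
    1 - sgn a - sgn b - sgn c + sgn (a + b) + sgn (a + c) + sgn (b + c) - sgn (a + b + c) := by
  revert a b c; decide

lemma two_ind (a : ZMod 2) : 2 * ind a = 1 - sgn a := by revert a; decide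

lemma dotp_comm {m : ℕ} (a b : Fin m → ZMod 2) : dotp a b = dotp b a := by
  simp [dotp, mul_comm]

lemma dotp_add_left {m : ℕ} (a b x : Fin m → ZMod 2) :
    dotp (a + b) x = dotp a x + dotp b x := by
  simp [dotp, add_mul, Finset.sum_add_distrib]

lemma dotp_add_right {m : ℕ} (a x y : Fin m → ZMod 2) :
    dotp a (x + y) = dotp a x + dotp a y := by
  simp [dotp, mul_add, Finset.sum_add_distrib]

lemma dotp_zero_left {m : ℕ} (x : Fin m → ZMod 2) : dotp 0 x = 0 := by simp [dotp]

lemma orth {m : ℕ} (y : Fin m → ZMod 2) :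
    ∑ a : Fin m → ZMod 2, sgn (dotp a y) = if y = 0 then 2 ^ m else 0 := by
  split_ifs with h
  · subst h
    have hz : ∀ a : Fin m → ZMod 2, dotp a 0 = 0 := by simp [dotp]
    simp [hz, sgn, Finset.card_univ, Fintype.card_fun]
  · obtain ⟨i, hi⟩ : ∃ i, y i ≠ 0 := by
      by_contra hc; push_neg at hc; exact h (funext fun i => hc i)
    have hyi : y i = 1 := by
      have h1 : ∀ u : ZMod 2, u ≠ 0 → u = 1 := by decide
      exact h1 _ hi
    have hsingle : dotp (Pi.single i 1) y = 1 := by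
      rw [dotp, Finset.sum_eq_single i]
      · simp [hyi]
      · intro j _ hj; simp [Pi.single_eq_of_ne hj]
      · simp
    have hflip : ∀ a : Fin m → ZMod 2,
        sgn (dotp (a + Pi.single i 1) y) = - sgn (dotp a y) := by
      intro a
      rw [dotp_add_left, hsingle, sgn_add]
      simp [sgn]
    have hbij : ∑ a : Fin m → ZMod 2, sgn (dotp (a + Pi.single i 1) y)
        = ∑ a : Fin m → ZMod 2, sgn (dotp a y) :=
      Fintype.sum_equiv (Equiv.addRight (Pi.single i 1)) _ _ (fun a => rfl)
    simp only [hflip, Finset.sum_neg_distrib] at hbij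
    linarith

lemma card_one {X : Type*} [Fintype X] [DecidableEq X] (v : X → ZMod 2) :
    ((Finset.univ.filter (fun x => v x = 1)).card : ℤ) = ∑ x, ind (v x) := by
  simp [ind, Finset.sum_boole]

lemma card_two {X : Type*} [Fintype X] [DecidableEq X] (v w : X → ZMod 2) :
    ((Finset.univ.filter (fun x => v x = 1 ∧ w x = 1)).card : ℤ)
      = ∑ x, ind (v x) * ind (w x) := by
  have h : ∀ a b : ZMod 2, ind a * ind b = if a = 1 ∧ b = 1 then (1:ℤ) else 0 := by decide
  simp only [h]
  simp [Finset.sum_boole]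

lemma card_three {X : Type*} [Fintype X] [DecidableEq X] (u v w : X → ZMod 2) :
    ((Finset.univ.filter (fun x => u x = 1 ∧ v x = 1 ∧ w x = 1)).card : ℤ)
      = ∑ x, ind (u x) * ind (v x) * ind (w x) := by
  have h : ∀ a b c : ZMod 2, ind a * ind b * ind c
      = if a = 1 ∧ b = 1 ∧ c = 1 then (1:ℤ) else 0 := by decide
  simp only [h]
  simp [Finset.sum_boole]

lemma add_self_fun {m : ℕ} (v : Fin m → ZMod 2) : v + v = 0 := by
  funext i
  have : ∀ u : ZMod 2, u + u = 0 := by decide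
  exact this (v i)

lemma eq_of_add_eq_zero_fun {m : ℕ} {v w : Fin m → ZMod 2} (h : v + w = 0) : v = w := by
  funext i
  have h2 : ∀ u u' : ZMod 2, u + u' = 0 → u = u' := by decide
  exact h2 _ _ (congrFun h i)

lemma walsh_inv {m k : ℕ} (hk : m = k + k) (f fstar : (Fin m → ZMod 2) → ZMod 2)
    (hdual : ∀ a, walshF f a = sgn (fstar a) * 2 ^ k) (x : Fin m → ZMod 2) :
    walshF fstar x = sgn (f x) * 2 ^ k := by
  have h2 : (2:ℤ) ^ k ≠ 0 := by positivity
  apply mul_left_cancel₀ h2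
  calc (2:ℤ) ^ k * walshF fstar x
      = ∑ b : Fin m → ZMod 2, 2 ^ k * sgn (fstar b + dotp x b) := by
        rw [walshF, walsh, Finset.mul_sum]
    _ = ∑ b : Fin m → ZMod 2, walshF f b * sgn (dotp x b) := by
        refine Finset.sum_congr rfl fun b _ => ?_
        rw [hdual b, sgn_add]; ring
    _ = ∑ b : Fin m → ZMod 2, ∑ y : Fin m → ZMod 2,
          sgn (f y) * sgn (dotp b (y + x)) := by
        refine Finset.sum_congr rfl fun b _ => ?_
        rw [walshF, walsh, Finset.sum_mul]
        refine Finset.sum_congr rfl fun y _ => ?_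
        rw [sgn_add, dotp_comm x b, dotp_add_right, sgn_add]; ring
    _ = ∑ y : Fin m → ZMod 2, sgn (f y) * ∑ b : Fin m → ZMod 2, sgn (dotp b (y + x)) := by
        rw [Finset.sum_comm]
        exact Finset.sum_congr rfl fun y _ => (Finset.mul_sum _ _ _).symm
    _ = sgn (f x) * 2 ^ m := by
        rw [Finset.sum_eq_single x]
        · rw [orth, if_pos (add_self_fun x)]
        · intro y _ hy
          rw [orth, if_neg, mul_zero]
          intro hc
          exact hy (eq_of_add_eq_zero_fun hc)
        · intro hx; exact absurd (Finset.mem_univ x) hx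
    _ = 2 ^ k * (sgn (f x) * 2 ^ k) := by rw [hk, pow_add]; ring

theorem stmt_14 (m : ℕ) (hm : Even m) (f fstar : (Fin m → ZMod 2) → ZMod 2)
    (hdual : ∀ a, walshF f a = sgn (fstar a) * 2 ^ (m / 2)) :
    (2 * ((suppD f).card : ℤ) = 2 ^ m - sgn (fstar 0) * 2 ^ (m / 2)) ∧
    (∀ b : Fin m → ZMod 2, b ≠ 0 →
      4 * ((blkD f fstar b).card : ℤ) = 2 ^ m - 2 ^ (m / 2) * (sgn (fstar 0) - 1)) ∧
    (∀ p ∈ suppD f, ∀ q ∈ suppD f, p ≠ q →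
      2 * ((Finset.univ.filter
          (fun b => b ≠ 0 ∧ p ∈ blkD f fstar b ∧ q ∈ blkD f fstar b)).card : ℤ)
        = 2 ^ (m - 1) + 2 ^ (m / 2) + sgn (fstar 0) - 1) ∧
    (∀ a b : Fin m → ZMod 2, a ≠ 0 → b ≠ 0 → a ≠ b →
      8 * ((blkD f fstar a ∩ blkD f fstar b).card : ℤ)
        = 2 ^ m + 2 ^ (m / 2 + 1)
          - 2 ^ (m / 2) * (sgn (fstar 0) + sgn (fstar a + fstar b + fstar (a + b)))) := by
  obtain ⟨k, hk⟩ := hm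
  have hk2 : m / 2 = k := by omega
  have hdk : ∀ a, walshF f a = sgn (fstar a) * 2 ^ k := by
    intro a; rw [hdual a, hk2]
  have h2m : (2:ℤ) ^ m = 2 ^ k * 2 ^ k := by rw [hk, pow_add]
  have hS1 : ∑ x : Fin m → ZMod 2, (1:ℤ) = 2 ^ m := by
    simp [Finset.card_univ, Fintype.card_fun]
  -- walsh at b, unfolded
  have hW : ∀ b, ∑ x : Fin m → ZMod 2, sgn (f x + dotp b x) = sgn (fstar b) * 2 ^ k := by
    intro b
    have := hdk b
    rwa [walshF, walsh] at this
  -- ∑ sgn (f x)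
  have Sf : ∑ x : Fin m → ZMod 2, sgn (f x) = sgn (fstar 0) * 2 ^ k := by
    have := hW 0
    simpa [dotp_zero_left] using this
  -- ∑ sgn (dotp b x + fstar b) = 0 for b ≠ 0
  have Sb : ∀ b : Fin m → ZMod 2, b ≠ 0 →
      ∑ x : Fin m → ZMod 2, sgn (dotp b x + fstar b) = 0 := by
    intro b hb
    have hpt : ∀ x, sgn (dotp b x + fstar b) = sgn (dotp x b) * sgn (fstar b) := by
      intro x; rw [dotp_comm b x, sgn_add]
    simp only [hpt, ← Finset.sum_mul]
    rw [orth, if_neg hb, zero_mul]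
  -- ∑ sgn (f x + (dotp b x + fstar b)) = 2^k
  have hsq : ∀ u : ZMod 2, sgn u * sgn u = 1 := by decide
  have Sfb : ∀ b : Fin m → ZMod 2,
      ∑ x : Fin m → ZMod 2, sgn (f x + (dotp b x + fstar b)) = 2 ^ k := by
    intro b
    have hpt : ∀ x, sgn (f x + (dotp b x + fstar b))
        = sgn (f x + dotp b x) * sgn (fstar b) := by
      intro x; rw [← add_assoc, sgn_add]
    simp only [hpt, ← Finset.sum_mul]
    rw [hW b, mul_comm (sgn (fstar b)) ((2:ℤ) ^ k), mul_assoc, hsq, mul_one]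
  refine ⟨?_, ?_, ?_, ?_⟩
  -- Part 1
  · have hD : ((suppD f).card : ℤ) = ∑ x, ind (f x) := card_one f
    calc 2 * ((suppD f).card : ℤ)
        = ∑ x : Fin m → ZMod 2, 2 * ind (f x) := by rw [hD, Finset.mul_sum]
      _ = ∑ x : Fin m → ZMod 2, (1 - sgn (f x)) :=
          Finset.sum_congr rfl fun x _ => two_ind _
      _ = 2 ^ m - sgn (fstar 0) * 2 ^ (m / 2) := by
          rw [Finset.sum_sub_distrib, hS1, Sf, hk2]
  -- Part 2
  · intro b hb
    have hblk : blkD f fstar b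
        = Finset.univ.filter (fun x => f x = 1 ∧ dotp b x + fstar b = 1) := by
      rw [blkD, suppD, Finset.filter_filter]
    calc 4 * ((blkD f fstar b).card : ℤ)
        = ∑ x : Fin m → ZMod 2, 4 * (ind (f x) * ind (dotp b x + fstar b)) := by
          rw [hblk, card_two, Finset.mul_sum]
      _ = ∑ x : Fin m → ZMod 2, (1 - sgn (f x) - sgn (dotp b x + fstar b)
            + sgn (f x + (dotp b x + fstar b))) :=
          Finset.sum_congr rfl fun x _ => expand2 _ _
      _ = 2 ^ m - 2 ^ (m / 2) * (sgn (fstar 0) - 1) := by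
          simp only [Finset.sum_add_distrib, Finset.sum_sub_distrib]
          rw [hS1, Sf, Sb b hb, Sfb b, hk2]
          ring
  -- Part 3
  · intro p hp q hq hpq
    have hfp : f p = 1 := by
      have := hp; rw [suppD, Finset.mem_filter] at this; exact this.2
    have hm0 : m ≠ 0 := by
      rintro rfl; exact hpq (funext fun i => i.elim0)
    have hpq0 : p + q ≠ 0 := fun hc => hpq (eq_of_add_eq_zero_fun hc)
    have hblkmem : ∀ (x : Fin m → ZMod 2), x ∈ suppD f → ∀ b,
        (x ∈ blkD f fstar b ↔ dotp b x + fstar b = 1) := by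
      intro x hx b
      rw [blkD, Finset.mem_filter]
      exact ⟨fun h => h.2, fun h => ⟨hx, h⟩⟩
    have hfe : Finset.univ.filter
          (fun b => b ≠ 0 ∧ p ∈ blkD f fstar b ∧ q ∈ blkD f fstar b)
        = (Finset.univ.filter (fun b : Fin m → ZMod 2 =>
            dotp b p + fstar b = 1 ∧ dotp b q + fstar b = 1)).filter (fun b => b ≠ 0) := by
      ext b
      simp only [Finset.mem_filter, Finset.mem_univ, true_and,
        hblkmem p hp b, hblkmem q hq b]
      tauto
    have hWp : ∀ r : Fin m → ZMod 2, r ∈ suppD f →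
        ∑ b : Fin m → ZMod 2, sgn (dotp b r + fstar b) = -(2 ^ k) := by
      intro r hr
      have hfr : f r = 1 := by
        have := hr; rw [suppD, Finset.mem_filter] at this; exact this.2
      calc ∑ b : Fin m → ZMod 2, sgn (dotp b r + fstar b)
          = walshF fstar r := by
            rw [walshF, walsh]
            exact Finset.sum_congr rfl fun b _ => by rw [dotp_comm, add_comm]
        _ = sgn (f r) * 2 ^ k := walsh_inv hk f fstar hdk r
        _ = -(2 ^ k) := by rw [hfr]; simp [sgn]
    have hcross : ∑ b : Fin m → ZMod 2,
        sgn ((dotp b p + fstar b) + (dotp b q + fstar b)) = 0 := by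
      have hc2 : ∀ u v w : ZMod 2, (u + w) + (v + w) = u + v := by decide
      have hpt : ∀ b : Fin m → ZMod 2,
          (dotp b p + fstar b) + (dotp b q + fstar b) = dotp b (p + q) := by
        intro b; rw [dotp_add_right]; exact hc2 _ _ _
      simp only [hpt]
      rw [orth, if_neg hpq0]
    have h4 : 4 * (((Finset.univ.filter (fun b : Fin m → ZMod 2 =>
          dotp b p + fstar b = 1 ∧ dotp b q + fstar b = 1)).card) : ℤ)
        = 2 ^ m + 2 ^ k + 2 ^ k := by
      calc 4 * (((Finset.univ.filter (fun b : Fin m → ZMod 2 =>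
            dotp b p + fstar b = 1 ∧ dotp b q + fstar b = 1)).card) : ℤ)
          = ∑ b : Fin m → ZMod 2,
              4 * (ind (dotp b p + fstar b) * ind (dotp b q + fstar b)) := by
            rw [card_two, Finset.mul_sum]
        _ = ∑ b : Fin m → ZMod 2, (1 - sgn (dotp b p + fstar b) - sgn (dotp b q + fstar b)
              + sgn ((dotp b p + fstar b) + (dotp b q + fstar b))) :=
            Finset.sum_congr rfl fun b _ => expand2 _ _
        _ = 2 ^ m + 2 ^ k + 2 ^ k := by
            simp only [Finset.sum_add_distrib, Finset.sum_sub_distrib]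
            rw [hS1, hWp p hp, hWp q hq, hcross]
            ring
    have hm1 : (2:ℤ) ^ m = 2 * 2 ^ (m - 1) := by
      conv_lhs => rw [show m = 1 + (m - 1) by omega]
      rw [pow_add, pow_one]
    have h01 : fstar 0 = 0 ∨ fstar 0 = 1 := by
      have : ∀ u : ZMod 2, u = 0 ∨ u = 1 := by decide
      exact this _
    rcases h01 with h0 | h0
    · have hself : (Finset.univ.filter (fun b : Fin m → ZMod 2 =>
          dotp b p + fstar b = 1 ∧ dotp b q + fstar b = 1)).filter (fun b => b ≠ 0)
          = Finset.univ.filter (fun b : Fin m → ZMod 2 =>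
          dotp b p + fstar b = 1 ∧ dotp b q + fstar b = 1) := by
        apply Finset.filter_eq_self.mpr
        intro b hb
        rw [Finset.mem_filter] at hb
        rintro rfl
        rw [dotp_zero_left, zero_add, h0] at hb
        exact absurd hb.2.1 (by decide)
      rw [hfe, hself]
      have hsgn0 : sgn (fstar 0) = 1 := by rw [h0]; rfl
      rw [hk2, hsgn0]
      linarith [h4]
    · have hmem0 : (0 : Fin m → ZMod 2) ∈ Finset.univ.filter (fun b : Fin m → ZMod 2 =>
          dotp b p + fstar b = 1 ∧ dotp b q + fstar b = 1) := by
        rw [Finset.mem_filter]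
        refine ⟨Finset.mem_univ _, ?_, ?_⟩ <;> rw [dotp_zero_left, zero_add, h0]
      have herase : (Finset.univ.filter (fun b : Fin m → ZMod 2 =>
          dotp b p + fstar b = 1 ∧ dotp b q + fstar b = 1)).filter (fun b => b ≠ 0)
          = (Finset.univ.filter (fun b : Fin m → ZMod 2 =>
          dotp b p + fstar b = 1 ∧ dotp b q + fstar b = 1)).erase 0 := by
        ext b
        simp only [Finset.mem_filter, Finset.mem_erase]
        tauto
      have hpos : 1 ≤ (Finset.univ.filter (fun b : Fin m → ZMod 2 =>
          dotp b p + fstar b = 1 ∧ dotp b q + fstar b = 1)).card :=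
        Finset.card_pos.mpr ⟨0, hmem0⟩
      rw [hfe, herase, Finset.card_erase_of_mem hmem0]
      have hsgn0 : sgn (fstar 0) = -1 := by rw [h0]; rfl
      rw [Nat.cast_sub hpos, hk2, hsgn0]
      push_cast
      linarith [h4]
  -- Part 4
  · intro a b ha hb hab
    have hab0 : a + b ≠ 0 := fun hc => hab (eq_of_add_eq_zero_fun hc)
    have hinter : blkD f fstar a ∩ blkD f fstar b
        = Finset.univ.filter (fun x => f x = 1 ∧
            (dotp a x + fstar a = 1) ∧ (dotp b x + fstar b = 1)) := by
      ext x
      simp only [Finset.mem_inter, blkD, suppD, Finset.mem_filter, Finset.mem_univ, true_and]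
      tauto
    have hcross : ∑ x : Fin m → ZMod 2,
        sgn ((dotp a x + fstar a) + (dotp b x + fstar b)) = 0 := by
      have hpt : ∀ x : Fin m → ZMod 2,
          sgn ((dotp a x + fstar a) + (dotp b x + fstar b))
            = sgn (dotp x (a + b)) * sgn (fstar a + fstar b) := by
        intro x
        have : (dotp a x + fstar a) + (dotp b x + fstar b)
            = dotp x (a + b) + (fstar a + fstar b) := by
          rw [dotp_add_right, dotp_comm x a, dotp_comm x b]; ring
        rw [this, sgn_add]
      simp only [hpt, ← Finset.sum_mul]
      rw [orth, if_neg hab0, zero_mul]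
    have htriple : ∑ x : Fin m → ZMod 2,
        sgn (f x + (dotp a x + fstar a) + (dotp b x + fstar b))
          = sgn (fstar a + fstar b + fstar (a + b)) * 2 ^ k := by
      have hpt : ∀ x : Fin m → ZMod 2,
          sgn (f x + (dotp a x + fstar a) + (dotp b x + fstar b))
            = sgn (f x + dotp (a + b) x) * sgn (fstar a + fstar b) := by
        intro x
        have : f x + (dotp a x + fstar a) + (dotp b x + fstar b)
            = (f x + dotp (a + b) x) + (fstar a + fstar b) := by
          rw [dotp_add_left]; ring
        rw [this, sgn_add]
      simp only [hpt, ← Finset.sum_mul]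
      rw [hW (a + b)]
      rw [sgn_add (fstar a + fstar b) (fstar (a + b)), sgn_add (fstar a) (fstar b)]
      ring
    calc 8 * ((blkD f fstar a ∩ blkD f fstar b).card : ℤ)
        = ∑ x : Fin m → ZMod 2, 8 * (ind (f x) * ind (dotp a x + fstar a)
            * ind (dotp b x + fstar b)) := by
          rw [hinter, card_three, Finset.mul_sum]
      _ = ∑ x : Fin m → ZMod 2, (1 - sgn (f x) - sgn (dotp a x + fstar a)
            - sgn (dotp b x + fstar b) + sgn (f x + (dotp a x + fstar a))
            + sgn (f x + (dotp b x + fstar b))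
            + sgn ((dotp a x + fstar a) + (dotp b x + fstar b))
            - sgn (f x + (dotp a x + fstar a) + (dotp b x + fstar b))) :=
          Finset.sum_congr rfl fun x _ => expand3 _ _ _
      _ = 2 ^ m + 2 ^ (m / 2 + 1)
          - 2 ^ (m / 2) * (sgn (fstar 0) + sgn (fstar a + fstar b + fstar (a + b))) := by
          simp only [Finset.sum_add_distrib, Finset.sum_sub_distrib]
          rw [hS1, Sf, Sb a ha, Sb b hb, Sfb a, Sfb b, hcross, htriple, hk2]
          ring
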